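/- arXiv:1504.05240 — 6 statements merged into one kernel-verified Lean document; each statement's English description precedes it below -/
import Mathlib

section
/- Let k be a squarefree positive integer with k ≡ 1 (mod 6). Then k is prime if and only if the number of pairs of positive integers (x, y) satisfying x² + 3y² = k is odd. -/
/-!
For a prime `p ≡ 1 (mod 3)` there is a primitive cube root of unity `ω` modulo `p`, so
`-3 = (2ω + 1)²` is a square mod `p`, and Thue's lemma turns this into `p = a² + 3b²`. Write
`π = a + b√-3`, so that `p = ππ̄`. If the norm of `z = x + y√-3` is divisible by `p`, then `p`
divides `π̄z` or `πz`; when the norm of `z` is `p` itself this forces `z = ±π` or `z = ±π̄`, so `p`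
has exactly one positive representation.

If `k` is composite and has a representation `z`, pick a prime `q ∣ k`. Then `-3` is a square
mod `q`, so `q = ππ̄` as before, and exactly one of `π, π̄` divides `z` because `q² ∤ k`. Swapping
that factor for its conjugate (`z ↦ zπ̄/π` or `z ↦ zπ/π̄`) is an involution on the representations
of `k` commuting with `z ↦ -z` and with conjugation, so it descends to positive representations.
A fixed point would make `π = ±π̄`, `k = qt²` or `3 ∣ k`, so the positive representations of `k`
pair off.
-/

lemma Set.Finite.even_ncard_of_involution {α : Type*} {s : Set α} (hs : s.Finite) (f : α → α)
    (hmaps : ∀ x ∈ s, f x ∈ s) (hinv : ∀ x ∈ s, f (f x) = x) (hne : ∀ x ∈ s, f x ≠ x) :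
    Even s.ncard := by
  classical
  rw [Set.ncard_eq_toFinset_card s hs, ← ZMod.natCast_eq_zero_iff_even, Finset.card_eq_sum_ones,
    Nat.cast_sum, Nat.cast_one]
  exact Finset.sum_involution (fun x _ => f x) (fun _ _ => by decide)
    (fun x hx _ => hne x (hs.mem_toFinset.1 hx)) (fun x hx => hs.mem_toFinset.2 (hmaps x
    (hs.mem_toFinset.1 hx))) (fun x hx => hinv x (hs.mem_toFinset.1 hx))

lemma ZMod.isSquare_neg_three_of_mod_three_eq_one {q : ℕ} [Fact q.Prime] (hq : q % 3 = 1) :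
    IsSquare (-3 : ZMod q) := by
  obtain ⟨u, hu⟩ := exists_prime_orderOf_dvd_card 3
    (show 3 ∣ Fintype.card (ZMod q)ˣ by rw [ZMod.card_units]; omega)
  have hu3 : (u : ZMod q) ^ 3 = 1 := by
    rw [← Units.val_pow_eq_pow_val, ← hu, pow_orderOf_eq_one, Units.val_one]
  have hu1 : (u : ZMod q) - 1 ≠ 0 := by
    rw [sub_ne_zero, Ne, Units.val_eq_one]
    rintro rfl
    simp at hu
  have hω : (u : ZMod q) ^ 2 + u + 1 = 0 :=
    (mul_eq_zero.1 (by linear_combination hu3 : ((u : ZMod q) - 1) * (u ^ 2 + u + 1) = 0)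
      ).resolve_left hu1
  exact ⟨2 * u + 1, by linear_combination -4 * hω⟩

/-- Thue's lemma. -/
lemma ZMod.exists_intCast_eq_mul_of_abs_le_sqrt {n : ℕ} [NeZero n] (t : ZMod n) :
    ∃ x y : ℤ, (x ≠ 0 ∨ y ≠ 0) ∧ |x| ≤ n.sqrt ∧ |y| ≤ n.sqrt ∧ (x : ZMod n) = t * y := by
  have hcard : Fintype.card (ZMod n) < Fintype.card (Fin (n.sqrt + 1) × Fin (n.sqrt + 1)) := by
    rw [ZMod.card, Fintype.card_prod, Fintype.card_fin, ← sq]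
    exact Nat.lt_succ_sqrt' n
  obtain ⟨⟨u, v⟩, ⟨u', v'⟩, hne, heq⟩ := Fintype.exists_ne_map_eq_of_card_lt
    (fun p : Fin (n.sqrt + 1) × Fin (n.sqrt + 1) => ((p.1 : ℕ) : ZMod n) - t * (p.2 : ℕ)) hcard
  refine ⟨(u : ℤ) - u', (v : ℤ) - v', ?_, ?_, ?_, ?_⟩
  · by_contra! h
    exact hne (by rw [Prod.mk.injEq, Fin.ext_iff, Fin.ext_iff]; omega)
  · have := u.is_le; have := u'.is_le; rw [abs_le]; constructor <;> omega
  · have := v.is_le; have := v'.is_le; rw [abs_le]; constructor <;> omega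
  · push_cast
    linear_combination heq

namespace Zsqrtd

section General

variable {d : ℤ}

lemma sq_dvd_norm_of_intCast_dvd {n : ℤ} {z : ℤ√d} (h : (n : ℤ√d) ∣ z) : n ^ 2 ∣ z.norm := by
  obtain ⟨w, rfl⟩ := h
  exact ⟨w.norm, by rw [norm_mul, norm_intCast]; ring⟩

def divInt (z : ℤ√d) (n : ℤ) : ℤ√d := ⟨z.re / n, z.im / n⟩

lemma intCast_mul_divInt {n : ℤ} {z : ℤ√d} (h : (n : ℤ√d) ∣ z) :
    (n : ℤ√d) * z.divInt n = z := by
  rw [intCast_dvd] at h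
  ext <;> simp [divInt, Int.mul_ediv_cancel' h.1, Int.mul_ediv_cancel' h.2]

def absPair (z : ℤ√d) : ℕ × ℕ := (z.re.natAbs, z.im.natAbs)

lemma absPair_eq_absPair_iff {z w : ℤ√d} :
    absPair w = absPair z ↔ w = z ∨ w = -z ∨ w = star z ∨ w = -star z := by
  simp only [absPair, Prod.mk.injEq, Int.natAbs_eq_natAbs_iff, Zsqrtd.ext_iff, re_neg, im_neg,
    re_star, im_star, neg_neg]
  tauto

lemma star_ne_self_of_im_ne_zero {z : ℤ√d} (h : z.im ≠ 0) : star z ≠ z :=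
  fun hz => h (by have := congrArg im hz; rw [im_star] at this; linarith)

lemma star_ne_neg_of_re_ne_zero {z : ℤ√d} (h : z.re ≠ 0) : star z ≠ -z :=
  fun hz => h (by have := congrArg re hz; rw [re_star, re_neg] at this; linarith)

lemma absPair_mk_natCast (p : ℕ × ℕ) : absPair (⟨p.1, p.2⟩ : ℤ√d) = p := rfl

end General

lemma norm_neg_three (z : ℤ√(-3)) : z.norm = z.re ^ 2 + 3 * z.im ^ 2 := by
  rw [norm_def]; ring

instance : IsDomain (ℤ√(-3)) :=
  have : NoZeroDivisors (ℤ√(-3)) := ⟨fun {z w} h => by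
    have := congrArg norm h
    rwa [norm_mul, norm_zero, mul_eq_zero, norm_eq_zero_iff (by norm_num),
      norm_eq_zero_iff (by norm_num)] at this⟩
  NoZeroDivisors.to_isDomain _

variable {q : ℤ} {π ρ z : ℤ√(-3)}

lemma eq_one_or_eq_neg_one_of_norm_eq_one (h : z.norm = 1) : z = 1 ∨ z = -1 := by
  rw [norm_neg_three] at h
  have him : z.im = 0 :=
    pow_eq_zero_iff (n := 2) two_ne_zero |>.1 (by nlinarith [sq_nonneg z.re, sq_nonneg z.im])
  rw [him] at h
  rcases sq_eq_one_iff.1 (by linarith : z.re ^ 2 = 1) with hre | hre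
  exacts [.inl (Zsqrtd.ext hre him), .inr (Zsqrtd.ext hre him)]

lemma re_ne_zero_of_not_three_dvd_norm (h : ¬ 3 ∣ z.norm) : z.re ≠ 0 :=
  fun h0 => h ⟨z.im ^ 2, by rw [norm_neg_three, h0]; ring⟩

lemma im_ne_zero_of_squarefree_norm (h : Squarefree z.norm) (h1 : z.norm ≠ 1) : z.im ≠ 0 := by
  intro h0
  have hu := Int.isUnit_iff.1 (h z.re ⟨1, by rw [norm_neg_three, h0]; ring⟩)
  exact h1 (by rcases hu with hu | hu <;> simp [norm_neg_three, h0, hu])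

lemma isSquare_neg_three_of_dvd_norm {p : ℕ} [hp : Fact p.Prime]
    (hz : (p : ℤ) ∣ z.norm) (hsq : ¬ (p : ℤ) ^ 2 ∣ z.norm) : IsSquare (-3 : ZMod p) := by
  have hnorm : z.re ^ 2 + 3 * z.im ^ 2 = z.norm := (norm_neg_three z).symm
  have him : ¬ (p : ℤ) ∣ z.im := fun him => by
    have hre : (p : ℤ) ∣ z.re ^ 2 :=
      (dvd_sub hz (dvd_mul_of_dvd_right (dvd_pow him two_ne_zero) 3)).trans ⟨1, by linarith⟩
    exact hsq (sq_dvd_norm_of_intCast_dvd ((intCast_dvd _ _).2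
      ⟨(Nat.prime_iff_prime_int.1 hp.out).dvd_of_dvd_pow hre, him⟩))
  have hy : (z.im : ZMod p) ≠ 0 := by rwa [Ne, ZMod.intCast_zmod_eq_zero_iff_dvd]
  have h0 : (z.re : ZMod p) ^ 2 + 3 * (z.im : ZMod p) ^ 2 = 0 := by
    rw [← hnorm] at hz; exact_mod_cast (ZMod.intCast_zmod_eq_zero_iff_dvd _ _).2 hz
  exact ⟨z.re / z.im, by field_simp; linear_combination -h0⟩

/-- Thue's lemma gives `x² + 3y² = c p` with `0 < c < 4`; `c = 2` is impossible mod `4`, and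
`c = 3` forces `3 ∣ x`. -/
lemma exists_norm_eq_of_isSquare_neg_three {p : ℕ} [hp : Fact p.Prime] (hp2 : p ≠ 2)
    (h : IsSquare (-3 : ZMod p)) : ∃ π : ℤ√(-3), π.norm = p := by
  obtain ⟨t, ht⟩ := h
  obtain ⟨x, y, hxy0, hx, hy, hxy⟩ := ZMod.exists_intCast_eq_mul_of_abs_le_sqrt t
  obtain ⟨c, hc⟩ : (p : ℤ) ∣ x ^ 2 + 3 * y ^ 2 := by
    rw [← ZMod.intCast_zmod_eq_zero_iff_dvd]; push_cast; rw [hxy]; linear_combination -y ^ 2 * ht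
  have hr : (p.sqrt : ℤ) ^ 2 < p := by
    have hne : p.sqrt ^ 2 ≠ p := fun h => hp.out.prime.not_isSquare ⟨p.sqrt, by rw [← sq, h]⟩
    exact_mod_cast (Nat.sqrt_le' p).lt_of_ne hne
  have hx2 : x ^ 2 < p := by rw [← sq_abs]; nlinarith [abs_nonneg x]
  have hy2 : y ^ 2 < p := by rw [← sq_abs]; nlinarith [abs_nonneg y]
  have hpos : 0 < x ^ 2 + 3 * y ^ 2 := by rcases hxy0 with h | h <;> positivity
  have hc0 : 0 < c := pos_of_mul_pos_right (hc ▸ hpos) (Int.natCast_nonneg p)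
  have hc4 : c < 4 := by nlinarith
  obtain rfl | rfl | rfl : c = 1 ∨ c = 2 ∨ c = 3 := by omega
  · exact ⟨⟨x, y⟩, by rw [norm_neg_three]; linarith⟩
  · obtain ⟨m, hm⟩ := hp.out.odd_of_ne_two hp2
    have h4 := congrArg (Int.cast : ℤ → ZMod 4) hc
    push_cast [hm] at h4
    have hmod4 : ∀ a b n : ZMod 4, a ^ 2 + 3 * b ^ 2 ≠ (2 * n + 1) * 2 := by decide
    exact (hmod4 _ _ _ h4).elim
  · obtain ⟨x', rfl⟩ : (3 : ℤ) ∣ x :=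
      Int.prime_three.dvd_of_dvd_pow (n := 2) ⟨p - y ^ 2, by linarith⟩
    exact ⟨⟨y, x'⟩, by rw [norm_neg_three]; linarith⟩

section PrimeNorm

lemma intCast_dvd_of_dvd_re (hq : Prime q) (hq3 : ¬ q ∣ 3) (hN : q ∣ z.norm) (hre : q ∣ z.re) :
    (q : ℤ√(-3)) ∣ z := by
  have him : q ∣ 3 * z.im ^ 2 := by
    rw [show 3 * z.im ^ 2 = z.norm - z.re ^ 2 by rw [norm_neg_three]; ring]
    exact dvd_sub hN (dvd_pow hre two_ne_zero)
  exact (intCast_dvd _ _).2 ⟨hre, hq.dvd_of_dvd_pow ((hq.dvd_or_dvd him).resolve_left hq3)⟩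

lemma not_dvd_re_of_norm_eq (hq : Prime q) (hq3 : ¬ q ∣ 3) (hπ : π.norm = q) : ¬ q ∣ π.re := by
  intro hre
  have : q * q ∣ q * 1 := by
    simpa [sq, ← hπ] using
      sq_dvd_norm_of_intCast_dvd (intCast_dvd_of_dvd_re hq hq3 hπ.symm.dvd hre)
  exact hq.not_isUnit (isUnit_of_dvd_one ((mul_dvd_mul_iff_left hq.ne_zero).1 this))

lemma re_ne_zero_of_norm_eq (hq : Prime q) (hq3 : ¬ q ∣ 3) (hπ : π.norm = q) : π.re ≠ 0 :=
  fun h => not_dvd_re_of_norm_eq hq hq3 hπ (h ▸ dvd_zero q)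

lemma im_ne_zero_of_norm_eq (hq : Prime q) (hπ : π.norm = q) : π.im ≠ 0 :=
  im_ne_zero_of_squarefree_norm (hπ ▸ hq.squarefree) (hπ ▸ fun h => hq.not_isUnit (h ▸ isUnit_one))

lemma norm_eq_of_eq_or_eq_star (hπ : π.norm = q) (hρ : ρ = π ∨ ρ = star π) : ρ.norm = q := by
  rcases hρ with rfl | rfl
  exacts [hπ, by rw [norm_conj, hπ]]

lemma mul_star_of_eq_or_eq_star (hπ : π.norm = q) (hρ : ρ = π ∨ ρ = star π) :
    ρ * star ρ = q := by
  rw [← norm_eq_mul_conj, norm_eq_of_eq_or_eq_star hπ hρ]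

lemma star_eq_or_eq_star_of_eq_or_eq_star (hρ : ρ = π ∨ ρ = star π) :
    star ρ = π ∨ star ρ = star π := by
  rcases hρ with rfl | rfl
  exacts [.inr rfl, .inl (star_star π)]

lemma exists_intCast_dvd_star_mul (hq : Prime q) (hq3 : ¬ q ∣ 3) (hπ : π.norm = q)
    (hz : q ∣ z.norm) : ∃ ρ, (ρ = π ∨ ρ = star π) ∧ (q : ℤ√(-3)) ∣ star ρ * z := by
  have hprod : (star π * z).re * (π * z).re = π.re ^ 2 * z.norm - 3 * z.im ^ 2 * π.norm := by
    simp only [re_mul, re_star, im_star, norm_neg_three]; ring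
  have hN : ∀ ρ, ρ.norm = q → q ∣ (ρ * z).norm := fun ρ hρ => by
    rw [norm_mul, hρ]; exact dvd_mul_right _ _
  rcases hq.dvd_or_dvd (hprod ▸ dvd_sub (dvd_mul_of_dvd_right hz _)
    (dvd_mul_of_dvd_right hπ.symm.dvd _)) with h | h
  · exact ⟨π, .inl rfl, intCast_dvd_of_dvd_re hq hq3 (hN _ (by rw [norm_conj, hπ])) h⟩
  · exact ⟨star π, .inr rfl, by rw [star_star]; exact intCast_dvd_of_dvd_re hq hq3 (hN _ hπ) h⟩

lemma intCast_dvd_of_dvd_star_mul_of_dvd_mul (hq : Prime q) (hq2 : ¬ q ∣ 2) (hq3 : ¬ q ∣ 3)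
    (hπ : π.norm = q) (h₁ : (q : ℤ√(-3)) ∣ star π * z) (h₂ : (q : ℤ√(-3)) ∣ π * z) :
    (q : ℤ√(-3)) ∣ z := by
  have htrace : star π + π = ((2 * π.re : ℤ) : ℤ√(-3)) := by ext <;> simp; ring
  have h : (q : ℤ√(-3)) ∣ ((2 * π.re : ℤ) : ℤ√(-3)) * z := by
    rw [← htrace, add_mul]; exact dvd_add h₁ h₂
  rw [intCast_dvd, re_smul, im_smul] at h
  have hq2a : ¬ q ∣ 2 * π.re :=
    fun h => (hq.dvd_or_dvd h).elim hq2 (not_dvd_re_of_norm_eq hq hq3 hπ)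
  exact (intCast_dvd _ _).2
    ⟨(hq.dvd_or_dvd h.1).resolve_left hq2a, (hq.dvd_or_dvd h.2).resolve_left hq2a⟩

lemma absPair_eq_of_norm_eq (hq : Prime q) (hq3 : ¬ q ∣ 3) (hπ : π.norm = q)
    (hz : z.norm = q) : absPair z = absPair π := by
  obtain ⟨ρ, hρ, v, hv⟩ := exists_intCast_dvd_star_mul hq hq3 hπ (by rw [hz])
  have hρρ := mul_star_of_eq_or_eq_star hπ hρ
  have hv1 : v.norm = 1 := by
    have := congrArg norm hv
    rw [norm_mul, norm_mul, norm_conj, norm_eq_of_eq_or_eq_star hπ hρ, hz, norm_intCast] at this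
    exact mul_left_cancel₀ (mul_ne_zero hq.ne_zero hq.ne_zero) (by linear_combination -this)
  have hρ0 : star ρ ≠ 0 := by
    rintro h0; rw [h0, mul_zero] at hρρ; exact hq.ne_zero (Int.cast_eq_zero.1 hρρ.symm)
  have hzρ : z = ρ ∨ z = -ρ := by
    rcases eq_one_or_eq_neg_one_of_norm_eq_one hv1 with rfl | rfl
    · exact .inl (mul_left_cancel₀ hρ0 (by linear_combination hv - hρρ))
    · exact .inr (mul_left_cancel₀ hρ0 (by linear_combination hv + hρρ))
  rw [absPair_eq_absPair_iff]
  rcases hρ with rfl | rfl <;> tauto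

end PrimeNorm

/-- For `q = ππ̄`: `z ↦ zπ̄/π` if `π ∣ z` (that is, `q ∣ π̄z`), and `z ↦ zπ/π̄` otherwise. -/
noncomputable def partner (π : ℤ√(-3)) (q : ℤ) (z : ℤ√(-3)) : ℤ√(-3) :=
  open Classical in
  if (q : ℤ√(-3)) ∣ star π * z then (star π ^ 2 * z).divInt q else (π ^ 2 * z).divInt q

section Partner

variable (hq : Prime q) (hq2 : ¬ q ∣ 2) (hq3 : ¬ q ∣ 3) (hπ : π.norm = q)
include hq hq2 hq3 hπ

lemma intCast_mul_partner (hρ : ρ = π ∨ ρ = star π) (hsq : ¬ q ^ 2 ∣ z.norm)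
    (hdvd : (q : ℤ√(-3)) ∣ star ρ * z) : (q : ℤ√(-3)) * partner π q z = star ρ ^ 2 * z := by
  have hdvd' : (q : ℤ√(-3)) ∣ star ρ ^ 2 * z := by
    rw [sq, mul_assoc]; exact dvd_mul_of_dvd_right hdvd _
  rcases hρ with rfl | rfl
  · rw [partner, if_pos hdvd, intCast_mul_divInt hdvd']
  · rw [star_star] at hdvd hdvd' ⊢
    have hndvd : ¬ (q : ℤ√(-3)) ∣ star π * z := fun h =>
      hsq (sq_dvd_norm_of_intCast_dvd (intCast_dvd_of_dvd_star_mul_of_dvd_mul hq hq2 hq3 hπ h hdvd))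
    rw [partner, if_neg hndvd, intCast_mul_divInt hdvd']

variable (hz : q ∣ z.norm) (hsq : ¬ q ^ 2 ∣ z.norm)
include hz hsq

lemma exists_intCast_mul_partner :
    ∃ ρ, (ρ = π ∨ ρ = star π) ∧ (q : ℤ√(-3)) ∣ star ρ * z ∧
      (q : ℤ√(-3)) * partner π q z = star ρ ^ 2 * z := by
  obtain ⟨ρ, hρ, hdvd⟩ := exists_intCast_dvd_star_mul hq hq3 hπ hz
  exact ⟨ρ, hρ, hdvd, intCast_mul_partner hq hq2 hq3 hπ hρ hsq hdvd⟩

lemma norm_partner : (partner π q z).norm = z.norm := by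
  obtain ⟨ρ, hρ, -, h⟩ := exists_intCast_mul_partner hq hq2 hq3 hπ hz hsq
  have := congrArg norm h
  rw [norm_mul, norm_mul, sq, norm_mul, norm_conj, norm_eq_of_eq_or_eq_star hπ hρ,
    norm_intCast] at this
  exact mul_left_cancel₀ (mul_ne_zero hq.ne_zero hq.ne_zero) this

lemma partner_partner : partner π q (partner π q z) = z := by
  obtain ⟨ρ, hρ, hdvd, h⟩ := exists_intCast_mul_partner hq hq2 hq3 hπ hz hsq
  have hρρ := mul_star_of_eq_or_eq_star hπ hρ
  have hq0 : (q : ℤ√(-3)) ≠ 0 := Int.cast_ne_zero.2 hq.ne_zero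
  have hρw : ρ * partner π q z = star ρ * z :=
    mul_left_cancel₀ hq0 (by linear_combination ρ * h + star ρ * z * hρρ)
  have hw := intCast_mul_partner hq hq2 hq3 hπ (star_eq_or_eq_star_of_eq_or_eq_star hρ)
    (by rwa [norm_partner hq hq2 hq3 hπ hz hsq]) (by rwa [star_star, hρw])
  rw [star_star] at hw
  refine mul_left_cancel₀ (mul_ne_zero hq0 hq0) ?_
  linear_combination (q : ℤ√(-3)) * hw + ρ ^ 2 * h + (ρ * star ρ + q) * z * hρρ

lemma partner_neg : partner π q (-z) = -partner π q z := by
  obtain ⟨ρ, hρ, hdvd, h⟩ := exists_intCast_mul_partner hq hq2 hq3 hπ hz hsq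
  have h' := intCast_mul_partner hq hq2 hq3 hπ hρ (by rwa [norm_neg]) (z := -z)
    (by rw [mul_neg]; exact hdvd.neg_right)
  exact mul_left_cancel₀ (Int.cast_ne_zero.2 hq.ne_zero) (by linear_combination h' + h)

lemma partner_star : partner π q (star z) = star (partner π q z) := by
  obtain ⟨ρ, hρ, ⟨c, hc⟩, h⟩ := exists_intCast_mul_partner hq hq2 hq3 hπ hz hsq
  have h' := intCast_mul_partner hq hq2 hq3 hπ (star_eq_or_eq_star_of_eq_or_eq_star hρ)
    (by rwa [norm_conj]) (z := star z) ⟨star c, by rw [← star_mul', hc, star_mul', star_intCast]⟩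
  have hs := congrArg star h
  rw [star_mul', star_intCast, star_mul', star_pow, star_star] at hs
  rw [star_star] at h'
  exact mul_left_cancel₀ (Int.cast_ne_zero.2 hq.ne_zero) (by linear_combination h' - hs)

lemma absPair_partner_congr {z' : ℤ√(-3)} (h : absPair z' = absPair z) :
    absPair (partner π q z') = absPair (partner π q z) := by
  have hz' : q ∣ (star z).norm := by rwa [norm_conj]
  have hsq' : ¬ q ^ 2 ∣ (star z).norm := by rwa [norm_conj]
  rw [absPair_eq_absPair_iff] at h ⊢
  rcases h with rfl | rfl | rfl | rfl
  · exact .inl rfl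
  · exact .inr (.inl (partner_neg hq hq2 hq3 hπ hz hsq))
  · exact .inr (.inr (.inl (partner_star hq hq2 hq3 hπ hz hsq)))
  · rw [partner_neg hq hq2 hq3 hπ hz' hsq', partner_star hq hq2 hq3 hπ hz hsq]
    exact .inr (.inr (.inr rfl))

omit hsq in
/-- Write `q · partner z = ρ̄²z` and `ρ̄z = qv`. Then `partner z = ±z` would give `ρ̄ = ±ρ`, and
`partner z = ±z̄` would give `v̄ = ±v`, i.e. `z.norm = q v.re²` or `z.norm = 3q v.im²`. -/
lemma absPair_partner_ne (hsf : Squarefree z.norm) (hne : z.norm ≠ q) (h3 : ¬ 3 ∣ z.norm) :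
    absPair (partner π q z) ≠ absPair z := by
  have hsq : ¬ q ^ 2 ∣ z.norm := fun h => hq.not_isUnit (hsf q (by rwa [← sq]))
  obtain ⟨ρ, hρ, ⟨v, hv⟩, h⟩ := exists_intCast_mul_partner hq hq2 hq3 hπ hz hsq
  have hρq := norm_eq_of_eq_or_eq_star hπ hρ
  have hρρ := mul_star_of_eq_or_eq_star hπ hρ
  have hq0 : (q : ℤ√(-3)) ≠ 0 := Int.cast_ne_zero.2 hq.ne_zero
  have hz0 : z ≠ 0 := by rintro rfl; simp at h3
  have hρ0 : star ρ ≠ 0 := by rintro h0; rw [h0, mul_zero] at hρρ; exact hq0 hρρ.symm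
  have hnorm : z.norm = q * v.norm := by
    have := congrArg norm hv
    rw [norm_mul, norm_mul, norm_conj, hρq, norm_intCast] at this
    exact mul_left_cancel₀ hq.ne_zero (by linear_combination this)
  have hs : ρ * star z = q * star v := by
    simpa only [star_mul', star_star, star_intCast] using congrArg star hv
  rw [Ne, absPair_eq_absPair_iff]
  rintro (hw | hw | hw | hw) <;> rw [hw] at h
  · refine star_ne_self_of_im_ne_zero (im_ne_zero_of_norm_eq hq hρq) ?_
    exact mul_left_cancel₀ hρ0 (mul_right_cancel₀ hz0 (by linear_combination -h - z * hρρ))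
  · refine star_ne_neg_of_re_ne_zero (re_ne_zero_of_norm_eq hq hq3 hρq) ?_
    exact mul_left_cancel₀ hρ0 (mul_right_cancel₀ hz0 (by linear_combination -h + z * hρρ))
  · refine star_ne_self_of_im_ne_zero (z := v) (im_ne_zero_of_squarefree_norm
      (hsf.squarefree_of_dvd ⟨q, by rw [hnorm, mul_comm]⟩) fun h1 => hne ?_) ?_
    · rw [hnorm, h1, mul_one]
    · refine mul_left_cancel₀ (mul_ne_zero hq0 hq0) ?_
      linear_combination -(q : ℤ√(-3)) * hs + ρ * h + star ρ * z * hρρ + q * hv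
  · refine star_ne_neg_of_re_ne_zero (z := v) (re_ne_zero_of_not_three_dvd_norm fun h3v => h3 ?_) ?_
    · rw [hnorm]; exact dvd_mul_of_dvd_right h3v _
    · refine mul_left_cancel₀ (mul_ne_zero hq0 hq0) ?_
      linear_combination -(q : ℤ√(-3)) * hs - ρ * h - star ρ * z * hρρ - q * hv

end Partner

end Zsqrtd

def posReps (k : ℕ) : Set (ℕ × ℕ) := {p | 0 < p.1 ∧ 0 < p.2 ∧ p.1 ^ 2 + 3 * p.2 ^ 2 = k}

namespace posReps

open Zsqrtd

lemma finite (k : ℕ) : (posReps k).Finite :=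
  (Set.finite_Iic (k, k)).subset fun _ ⟨_, _, hp⟩ => ⟨by nlinarith, by nlinarith⟩

lemma norm_mk_of_mem {k : ℕ} {p : ℕ × ℕ} (hp : p ∈ posReps k) :
    (⟨p.1, p.2⟩ : ℤ√(-3)).norm = k := by
  rw [norm_neg_three]; dsimp only; exact_mod_cast hp.2.2

lemma absPair_mem_of_norm_eq {k : ℕ} {z : ℤ√(-3)} (hz : z.norm = k) (hre : z.re ≠ 0)
    (him : z.im ≠ 0) : z.absPair ∈ posReps k := by
  refine ⟨Int.natAbs_pos.2 hre, Int.natAbs_pos.2 him, ?_⟩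
  rw [norm_neg_three] at hz
  zify
  simpa only [absPair, Int.natCast_natAbs, sq_abs] using hz

lemma eq_singleton {p : ℕ} {π : ℤ√(-3)} (hp : p.Prime) (hp3 : ¬ 3 ∣ p) (hπ : π.norm = p) :
    posReps p = {π.absPair} := by
  have hpZ := Nat.prime_iff_prime_int.1 hp
  have hp3' : ¬ (p : ℤ) ∣ 3 := fun h =>
    hp3 ((Nat.prime_dvd_prime_iff_eq hp Nat.prime_three).1 (by exact_mod_cast h) ▸ dvd_rfl)
  ext x
  refine ⟨fun hx => ?_, fun hx => hx ▸ absPair_mem_of_norm_eq hπ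
    (re_ne_zero_of_norm_eq hpZ hp3' hπ) (im_ne_zero_of_norm_eq hpZ hπ)⟩
  rw [Set.mem_singleton_iff, ← absPair_mk_natCast x]
  exact absPair_eq_of_norm_eq hpZ hp3' hπ (norm_mk_of_mem hx)

lemma even_ncard {k q : ℕ} {π : ℤ√(-3)} (hk : Squarefree k) (hk2 : ¬ 2 ∣ k) (hk3 : ¬ 3 ∣ k)
    (hq : q.Prime) (hqk : q ∣ k) (hkq : k ≠ q) (hπ : π.norm = q) : Even (posReps k).ncard := by
  have hqZ := Nat.prime_iff_prime_int.1 hq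
  have hq2 : ¬ (q : ℤ) ∣ 2 := fun h =>
    hk2 ((Nat.prime_dvd_prime_iff_eq hq Nat.prime_two).1 (by exact_mod_cast h) ▸ hqk)
  have hq3 : ¬ (q : ℤ) ∣ 3 := fun h =>
    hk3 ((Nat.prime_dvd_prime_iff_eq hq Nat.prime_three).1 (by exact_mod_cast h) ▸ hqk)
  have hkZ : Squarefree (k : ℤ) := Int.squarefree_natCast.2 hk
  have hqkZ : (q : ℤ) ∣ k := by exact_mod_cast hqk
  have hsq : ¬ (q : ℤ) ^ 2 ∣ k := fun h => hqZ.not_isUnit (hkZ q (by rwa [← sq]))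
  have hk1 : (k : ℤ) ≠ 1 := by
    exact_mod_cast fun h : k = 1 => hq.ne_one (Nat.dvd_one.1 (h ▸ hqk))
  have hkq' : (k : ℤ) ≠ q := by exact_mod_cast hkq
  have hk3' : ¬ 3 ∣ (k : ℤ) := by exact_mod_cast hk3
  refine (finite k).even_ncard_of_involution (fun p => (partner π q ⟨p.1, p.2⟩).absPair)
    (fun p hp => ?_) (fun p hp => ?_) (fun p hp => ?_)
  all_goals have hz := norm_mk_of_mem hp
  · have hw := (norm_partner hqZ hq2 hq3 hπ (hz ▸ hqkZ) (hz ▸ hsq)).trans hz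
    exact absPair_mem_of_norm_eq hw (re_ne_zero_of_not_three_dvd_norm (hw ▸ hk3'))
      (im_ne_zero_of_squarefree_norm (hw ▸ hkZ) (hw ▸ hk1))
  · have hw := (norm_partner hqZ hq2 hq3 hπ (hz ▸ hqkZ) (hz ▸ hsq)).trans hz
    rw [absPair_partner_congr hqZ hq2 hq3 hπ (hw ▸ hqkZ) (hw ▸ hsq) (absPair_mk_natCast _),
      partner_partner hqZ hq2 hq3 hπ (hz ▸ hqkZ) (hz ▸ hsq), absPair_mk_natCast]
  · exact absPair_partner_ne hqZ hq2 hq3 hπ (hz ▸ hqkZ) (hz ▸ hkZ) (hz ▸ hkq') (hz ▸ hk3')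

end posReps

theorem atkin_condition_two_general (k : ℕ) (hsf : Squarefree k) (hmod : k % 6 = 1) :
    Nat.Prime k ↔
      Odd {p : ℕ × ℕ | 0 < p.1 ∧ 0 < p.2 ∧ p.1 ^ 2 + 3 * p.2 ^ 2 = k}.ncard := by
  have hk2 : ¬ 2 ∣ k := by omega
  have hk3 : ¬ 3 ∣ k := by omega
  change _ ↔ Odd (posReps k).ncard
  constructor
  · intro hk
    have := Fact.mk hk
    obtain ⟨π, hπ⟩ := Zsqrtd.exists_norm_eq_of_isSquare_neg_three (p := k) (by omega)
      (ZMod.isSquare_neg_three_of_mod_three_eq_one (by omega))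
    rw [posReps.eq_singleton hk hk3 hπ, Set.ncard_singleton]
    exact odd_one
  · intro hodd
    by_contra hk
    obtain ⟨p, hp⟩ := Set.nonempty_of_ncard_ne_zero hodd.pos.ne'
    have hk1 : k ≠ 1 := by rintro rfl; nlinarith [hp.1, hp.2.1, hp.2.2]
    obtain ⟨q, hq, hqk⟩ := Nat.exists_prime_and_dvd hk1
    have := Fact.mk hq
    have hsq : ¬ q ^ 2 ∣ k := fun h => hq.one_lt.ne' (Nat.isUnit_iff.1 (hsf q (by rwa [← sq])))
    have hz := posReps.norm_mk_of_mem hp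
    obtain ⟨π, hπ⟩ := Zsqrtd.exists_norm_eq_of_isSquare_neg_three (p := q)
      (by rintro rfl; exact hk2 hqk)
      (Zsqrtd.isSquare_neg_three_of_dvd_norm (z := ⟨p.1, p.2⟩) (by rw [hz]; exact_mod_cast hqk)
        (by rw [hz]; exact_mod_cast hsq))
    exact Nat.not_even_iff_odd.2 hodd
      (posReps.even_ncard hsf hk2 hk3 hq hqk (fun h => hk (h ▸ hq)) hπ)

/-- Atkin's second condition: a squarefree positive `k ≡ 1 (mod 6)` is prime iff the
number of positive integer pairs `(x, y)` with `x² + 3y² = k` is odd. -/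
theorem atkin_condition_two (k : ℕ) (hk : 0 < k) (hsf : Squarefree k) (hmod : k % 6 = 1) :
    Nat.Prime k ↔
      Odd {p : ℕ × ℕ | 0 < p.1 ∧ 0 < p.2 ∧ p.1 ^ 2 + 3 * p.2 ^ 2 = k}.ncard :=
  atkin_condition_two_general k hsf hmod
end

section
/- There exists a constant C > 0 such that for every integer k ≥ 16 that is coprime to 6, the number of pairs of positive integers (x, y) satisfying x² + 3y² = k is at most k^(C / log log k). -/
/-!
A positive solution of `x² + 3y² = k` is `(g x', g y')` with `g² ∣ k` and `(x', y')` a coprime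
solution for `m = k / g²`. Then `y'` is a unit mod `m` and `x' / y'` is a square root of `-3`
mod `m`; two coprime solutions with the same ratio coincide, since their cross products
`x₁ y₂ ≡ x₂ y₁ (mod m)` are both below `m`. As `2` and `-3` are units mod `m`, each
`ZMod (p ^ e)` is a local ring in which `s² = t²` forces `s = ± t`, so by the Chinese remainder
theorem `-3` has at most `2 ^ ω(m) ≤ d(k)` square roots mod `m`. Hence there are at most `d(k)²`
solutions. Finally, for `L = log k`, primes `p ≤ √L` contribute factors `≤ 1 + L / log 2` to
`d(k) = ∏ (a_p + 1)`, while the exponents of primes `p > √L` sum to at most `2L / log L`; this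
gives `d(k) ≤ k ^ (34 / log log k)`.
-/

open Finset Real

namespace IsLocalRing

variable {R : Type*} [CommRing R] [IsLocalRing R]

theorem eq_or_eq_neg_of_sq_eq_sq (h2 : IsUnit (2 : R)) {s t : R} (hs : IsUnit s)
    (h : s ^ 2 = t ^ 2) : s = t ∨ s = -t := by
  have hprod : (s - t) * (s + t) = 0 := by linear_combination h
  have hsum : IsUnit ((s - t) + (s + t)) := by
    rw [show (s - t) + (s + t) = 2 * s by ring]; exact h2.mul hs
  rcases isUnit_or_isUnit_of_isUnit_add hsum with hu | hu
  · right; linear_combination hu.mul_right_eq_zero.mp hprod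
  · left; linear_combination hu.mul_left_eq_zero.mp hprod

theorem card_sq_eq_le_two (h2 : IsUnit (2 : R)) {c : R} (hc : IsUnit c) :
    Nat.card {t : R // t ^ 2 = c} ≤ 2 := by
  rw [← Set.coe_ofPred, Nat.card_coe_set_eq]
  rcases Set.eq_empty_or_nonempty {t : R | t ^ 2 = c} with he | ⟨t, ht⟩
  · simp [he]
  have hsub : {s : R | s ^ 2 = c} ⊆ {t, -t} := fun s hs => by
    have hsu : IsUnit s := (isUnit_pow_iff two_ne_zero).mp (hs.symm ▸ hc)
    exact eq_or_eq_neg_of_sq_eq_sq h2 hsu (hs.trans ht.symm)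
  exact (Set.ncard_le_ncard hsub (Set.toFinite _)).trans
    ((Set.ncard_insert_le _ _).trans (by simp))

end IsLocalRing

instance ZMod.isLocalRing_prime_pow {p n : ℕ} [Fact p.Prime] [NeZero n] :
    IsLocalRing (ZMod (p ^ n)) :=
  have : Fact (1 < p ^ n) := ⟨Nat.one_lt_pow (NeZero.ne n) (Fact.out : p.Prime).one_lt⟩
  IsLocalRing.of_surjective' (PadicInt.toZModPow n) (ZMod.ringHom_surjective _)

namespace ZMod

theorem card_sq_eq_intCast_mul {m n : ℕ} (h : m.Coprime n) (c : ℤ) :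
    Nat.card {t : ZMod (m * n) // t ^ 2 = c} =
      Nat.card {t : ZMod m // t ^ 2 = c} * Nat.card {t : ZMod n // t ^ 2 = c} := by
  let e := chineseRemainder h
  have hsq : ∀ t : ZMod (m * n), t ^ 2 = c ↔ (e t).1 ^ 2 = c ∧ (e t).2 ^ 2 = c := fun t => by
    rw [← e.injective.eq_iff, map_pow, map_intCast, Prod.ext_iff]
    simp
  rw [← Nat.card_prod]
  exact Nat.card_congr ((e.toEquiv.subtypeEquiv hsq).trans Equiv.subtypeProdEquivProd)

theorem isUnit_intCast_of_dvd {m n : ℕ} (h : n ∣ m) {c : ℤ} (hc : IsUnit (c : ZMod m)) :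
    IsUnit (c : ZMod n) := by
  simpa using hc.map (castHom h (ZMod n))

theorem isUnit_two_of_dvd {m n : ℕ} (h : n ∣ m) (h2 : IsUnit (2 : ZMod m)) :
    IsUnit (2 : ZMod n) :=
  map_ofNat (castHom h (ZMod n)) 2 ▸ h2.map _

theorem card_sq_eq_intCast_le {m : ℕ} {c : ℤ} (h2 : IsUnit (2 : ZMod m))
    (hc : IsUnit (c : ZMod m)) : Nat.card {t : ZMod m // t ^ 2 = c} ≤ 2 ^ #m.primeFactors := by
  induction m using Nat.recOnPosPrimePosCoprime with
  | zero => exact absurd (Int.isUnit_iff.mp h2) (by decide)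
  | one =>
    rw [Nat.primeFactors_one, card_empty, pow_zero, Finite.card_le_one_iff_subsingleton]
    infer_instance
  | prime_pow p n hp hn =>
    have : Fact p.Prime := ⟨hp⟩
    have : NeZero n := ⟨hn.ne'⟩
    rw [Nat.primeFactors_prime_pow hn.ne' hp, card_singleton, pow_one]
    exact IsLocalRing.card_sq_eq_le_two h2 hc
  | coprime a b ha hb hab iha ihb =>
    rw [card_sq_eq_intCast_mul hab, hab.primeFactors_mul,
      card_union_of_disjoint hab.disjoint_primeFactors, pow_add]
    have ha : a ∣ a * b := dvd_mul_right a b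
    have hb : b ∣ a * b := dvd_mul_left b a
    exact Nat.mul_le_mul (iha (isUnit_two_of_dvd ha h2) (isUnit_intCast_of_dvd ha hc))
      (ihb (isUnit_two_of_dvd hb h2) (isUnit_intCast_of_dvd hb hc))

end ZMod

theorem Nat.Coprime.eq_of_mul_eq_mul {a b c d : ℕ} (hab : a.Coprime b) (hcd : c.Coprime d)
    (h : a * d = c * b) : a = c ∧ b = d := by
  have hac : a = c := Nat.dvd_antisymm (hab.dvd_of_dvd_mul_right ⟨d, h.symm⟩)
    (hcd.dvd_of_dvd_mul_right ⟨b, h⟩)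
  subst hac
  refine ⟨rfl, ?_⟩
  rcases Nat.eq_zero_or_pos a with rfl | ha
  · rw [Nat.coprime_zero_left] at hab hcd; rw [hab, hcd]
  · exact (Nat.eq_of_mul_eq_mul_left ha h).symm

def ellipsePoints (d k : ℕ) : Finset (ℕ × ℕ) :=
  (Icc 1 k ×ˢ Icc 1 k).filter fun p => p.1 ^ 2 + d * p.2 ^ 2 = k

def primitiveEllipsePoints (d k : ℕ) : Finset (ℕ × ℕ) :=
  (ellipsePoints d k).filter fun p => p.1.Coprime p.2

section EllipsePoints

variable {d k : ℕ}

theorem mem_ellipsePoints (hd : 0 < d) {p : ℕ × ℕ} :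
    p ∈ ellipsePoints d k ↔ 0 < p.1 ∧ 0 < p.2 ∧ p.1 ^ 2 + d * p.2 ^ 2 = k := by
  simp only [ellipsePoints, mem_filter, mem_product, mem_Icc]
  constructor
  · rintro ⟨⟨⟨hx, -⟩, hy, -⟩, h⟩
    exact ⟨hx, hy, h⟩
  · rintro ⟨hx, hy, h⟩
    refine ⟨⟨⟨hx, ?_⟩, hy, ?_⟩, h⟩ <;> nlinarith

theorem mem_primitiveEllipsePoints (hd : 0 < d) {p : ℕ × ℕ} :
    p ∈ primitiveEllipsePoints d k ↔
      0 < p.1 ∧ 0 < p.2 ∧ p.1 ^ 2 + d * p.2 ^ 2 = k ∧ p.1.Coprime p.2 := by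
  rw [primitiveEllipsePoints, mem_filter, mem_ellipsePoints hd, and_assoc, and_assoc]

theorem card_primitiveEllipsePoints_le (hd : 0 < d) :
    #(primitiveEllipsePoints d k) ≤ Nat.card {t : ZMod k // t ^ 2 = (-d : ℤ)} := by
  obtain rfl | hk0 := eq_or_ne k 0
  · simp [primitiveEllipsePoints, ellipsePoints]
  have : NeZero k := ⟨hk0⟩
  have hunit : ∀ p ∈ primitiveEllipsePoints d k, IsUnit (p.2 : ZMod k) := fun p hp => by
    obtain ⟨-, -, hk, hcop⟩ := (mem_primitiveEllipsePoints hd).mp hp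
    rw [ZMod.isUnit_iff_coprime, ← hk, pow_two p.2, ← mul_assoc,
      Nat.coprime_add_mul_right_right]
    exact hcop.symm.pow_right 2
  rw [← Set.coe_ofPred, Nat.card_coe_set_eq, ← Set.ncard_coe_finset]
  refine Set.ncard_le_ncard_of_injOn (fun p => (p.1 : ZMod k) * (p.2 : ZMod k)⁻¹) ?_ ?_
    (Set.toFinite _)
  · intro p hp
    obtain ⟨-, -, hk, -⟩ := (mem_primitiveEllipsePoints hd).mp hp
    have hk' : ((p.1 ^ 2 + d * p.2 ^ 2 : ℕ) : ZMod k) = 0 := by rw [hk, ZMod.natCast_self]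
    have hy := ZMod.mul_inv_of_unit _ (hunit p hp)
    change _ ^ 2 = _
    push_cast at hk' ⊢
    linear_combination
      (p.2 : ZMod k)⁻¹ ^ 2 * hk' - d * ((p.2 : ZMod k) * (p.2 : ZMod k)⁻¹ + 1) * hy
  · intro p hp q hq hpq
    obtain ⟨hx₁, hy₁, hk₁, hcop₁⟩ := (mem_primitiveEllipsePoints hd).mp hp
    obtain ⟨hx₂, hy₂, hk₂, hcop₂⟩ := (mem_primitiveEllipsePoints hd).mp hq
    have hcross : ((p.1 * q.2 : ℕ) : ZMod k) = (q.1 * p.2 : ℕ) := by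
      have h₁ := ZMod.mul_inv_of_unit _ (hunit p hp)
      have h₂ := ZMod.mul_inv_of_unit _ (hunit q hq)
      push_cast
      linear_combination (p.2 : ZMod k) * q.2 * hpq - (p.1 : ZMod k) * q.2 * h₁ +
        (q.1 : ZMod k) * p.2 * h₂
    have hp₁ : p.1 ^ 2 < k := by nlinarith
    have hp₂ : p.2 ^ 2 < k := by nlinarith
    have hq₁ : q.1 ^ 2 < k := by nlinarith
    have hq₂ : q.2 ^ 2 < k := by nlinarith
    rw [ZMod.natCast_eq_natCast_iff', Nat.mod_eq_of_lt (by nlinarith),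
      Nat.mod_eq_of_lt (by nlinarith)] at hcross
    obtain ⟨h₁, h₂⟩ := hcop₁.eq_of_mul_eq_mul hcop₂ hcross
    exact Prod.ext h₁ h₂

theorem ellipsePoints_subset_biUnion (hd : 0 < d) :
    ellipsePoints d k ⊆ {g ∈ k.divisors | g ^ 2 ∣ k}.biUnion fun g =>
      (primitiveEllipsePoints d (k / g ^ 2)).image fun p => (g * p.1, g * p.2) := by
  intro p hp
  obtain ⟨hx, hy, hk⟩ := (mem_ellipsePoints hd).mp hp
  obtain ⟨g, a, b, hg, hab, ha, hb⟩ := Nat.exists_coprime' (Nat.gcd_pos_of_pos_left p.2 hx)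
  have hka : k = g ^ 2 * (a ^ 2 + d * b ^ 2) := by rw [← hk, ha, hb]; ring
  have hg2 : g ^ 2 ∣ k := ⟨_, hka⟩
  simp only [mem_biUnion, mem_filter, Nat.mem_divisors, mem_image]
  refine ⟨g, ⟨⟨(dvd_pow_self g two_ne_zero).trans hg2, ?_⟩, hg2⟩, (a, b), ?_, ?_⟩
  · rw [← hk]; exact (Nat.add_pos_left (pow_pos hx 2) _).ne'
  · rw [mem_primitiveEllipsePoints hd, hka, Nat.mul_div_cancel_left _ (by positivity)]
    exact ⟨Nat.pos_of_mul_pos_right (ha ▸ hx), Nat.pos_of_mul_pos_right (hb ▸ hy), rfl, hab⟩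
  · ext <;> simp [ha, hb, mul_comm]

theorem card_ellipsePoints_le (hd : 0 < d) (h2 : IsUnit (2 : ZMod k))
    (hc : IsUnit ((-d : ℤ) : ZMod k)) :
    #(ellipsePoints d k) ≤ #k.divisors * 2 ^ #k.primeFactors := by
  calc #(ellipsePoints d k)
      ≤ ∑ g ∈ {g ∈ k.divisors | g ^ 2 ∣ k}, #(primitiveEllipsePoints d (k / g ^ 2)) :=
        (card_le_card (ellipsePoints_subset_biUnion hd)).trans
          (card_biUnion_le.trans (sum_le_sum fun g _ => card_image_le))
    _ ≤ ∑ g ∈ {g ∈ k.divisors | g ^ 2 ∣ k}, 2 ^ #k.primeFactors := by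
        refine sum_le_sum fun g hg => ?_
        obtain ⟨hgk, hg2⟩ := mem_filter.mp hg
        have hk := (Nat.mem_divisors.mp hgk).2
        have hdvd : k / g ^ 2 ∣ k := Nat.div_dvd_of_dvd hg2
        calc #(primitiveEllipsePoints d (k / g ^ 2))
            ≤ Nat.card {t : ZMod (k / g ^ 2) // t ^ 2 = (-d : ℤ)} :=
              card_primitiveEllipsePoints_le hd
          _ ≤ 2 ^ #(k / g ^ 2).primeFactors := ZMod.card_sq_eq_intCast_le
              (ZMod.isUnit_two_of_dvd hdvd h2) (ZMod.isUnit_intCast_of_dvd hdvd hc)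
          _ ≤ 2 ^ #k.primeFactors :=
              Nat.pow_le_pow_right two_pos (card_le_card (Nat.primeFactors_mono hdvd hk))
    _ ≤ #k.divisors * 2 ^ #k.primeFactors := by
        rw [sum_const, smul_eq_mul]
        exact Nat.mul_le_mul_right _ (card_filter_le _ _)

end EllipsePoints

theorem Nat.two_pow_card_primeFactors_le_card_divisors {n : ℕ} (hn : n ≠ 0) :
    2 ^ #n.primeFactors ≤ #n.divisors := by
  rw [Nat.card_divisors hn]
  exact pow_card_le_prod _ _ _ fun p hp =>
    Nat.succ_le_succ ((Nat.prime_of_mem_primeFactors hp).factorization_pos_of_dvd hn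
      (Nat.dvd_of_mem_primeFactors hp))

theorem sum_factorization_mul_log_le {n : ℕ} {s : Finset ℕ} (hs : s ⊆ n.primeFactors) :
    ∑ p ∈ s, n.factorization p * log p ≤ log n := by
  rw [log_nat_eq_sum_factorization, Finsupp.sum, Nat.support_factorization]
  exact sum_le_sum_of_subset_of_nonneg hs fun p _ _ => by positivity

theorem cast_card_le_of_forall_pos_le {s : Finset ℕ} {y : ℝ} (hy : 0 ≤ y)
    (hs : ∀ p ∈ s, 0 < p ∧ (p : ℝ) ≤ y) : (#s : ℝ) ≤ y := by
  have hsub : s ⊆ Icc 1 ⌊y⌋₊ := fun p hp =>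
    mem_Icc.mpr ⟨(hs p hp).1, Nat.le_floor (hs p hp).2⟩
  calc (#s : ℝ) ≤ ⌊y⌋₊ := by simpa using card_le_card hsub
    _ ≤ y := Nat.floor_le hy

theorem card_divisors_le_rpow {n : ℕ} (hn : n ≠ 0) {y : ℝ} (hy : 1 < y) :
    (#n.divisors : ℝ) ≤ (1 + log n / log 2) ^ y * (n : ℝ) ^ (log 2 / log y) := by
  set a := n.factorization
  have hlog2 : 0 < log 2 := log_pos one_lt_two
  have hfactor_log : ∀ p ∈ n.primeFactors, (a p : ℝ) * log p ≤ log n := fun p hp => by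
    simpa using sum_factorization_mul_log_le (singleton_subset_iff.mpr hp)
  rw [Nat.card_divisors hn, Nat.cast_prod,
    ← prod_filter_mul_prod_filter_not n.primeFactors fun p : ℕ => (p : ℝ) ≤ y]
  set small := n.primeFactors.filter fun p : ℕ => (p : ℝ) ≤ y
  set large := n.primeFactors.filter fun p : ℕ => ¬(p : ℝ) ≤ y
  refine mul_le_mul ?small ?large (prod_nonneg fun _ _ => by positivity) (by positivity)
  case small =>
    have hfac : ∀ p ∈ small,
        ((a p + 1 : ℕ) : ℝ) ≤ 1 + log n / log 2 := fun p hp => by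
      obtain ⟨hp, -⟩ := mem_filter.mp hp
      have hlogp : log 2 ≤ log p :=
        log_le_log two_pos (by exact_mod_cast (Nat.prime_of_mem_primeFactors hp).two_le)
      have : (a p : ℝ) ≤ log n / log 2 := by
        rw [le_div_iff₀ hlog2]
        exact (mul_le_mul_of_nonneg_left hlogp (Nat.cast_nonneg _)).trans (hfactor_log p hp)
      push_cast
      linarith
    have hcard : (#small : ℝ) ≤ y :=
      cast_card_le_of_forall_pos_le (by linarith) fun p hp => by
        obtain ⟨hp, hpy⟩ := mem_filter.mp hp
        exact ⟨(Nat.prime_of_mem_primeFactors hp).pos, hpy⟩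
    have hB : 1 ≤ 1 + log n / log 2 := le_add_of_nonneg_right (by positivity)
    calc _ ≤ ∏ _p ∈ small, (1 + log n / log 2) :=
          prod_le_prod (fun _ _ => by positivity) hfac
      _ = (1 + log n / log 2) ^ (#small : ℝ) := by
          rw [prod_const, rpow_natCast]
      _ ≤ (1 + log n / log 2) ^ y := rpow_le_rpow_of_exponent_le hB hcard
  case large =>
    have hsum : ∑ p ∈ large, (a p : ℝ) ≤ log n / log y := by
      rw [le_div_iff₀ (log_pos hy), sum_mul]
      refine (sum_le_sum fun p hp => ?_).trans (sum_factorization_mul_log_le (filter_subset _ _))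
      obtain ⟨hp, hpy⟩ := mem_filter.mp hp
      exact mul_le_mul_of_nonneg_left (log_le_log (by linarith) (le_of_not_ge hpy))
        (Nat.cast_nonneg _)
    calc _ ≤ ∏ p ∈ large, (2 : ℝ) ^ (a p : ℝ) :=
          prod_le_prod (fun _ _ => by positivity) fun p _ => by
            rw [rpow_natCast]; exact_mod_cast Nat.lt_two_pow_self
      _ = 2 ^ ∑ p ∈ large, (a p : ℝ) :=
          (rpow_sum_of_pos two_pos _ _).symm
      _ ≤ 2 ^ (log n / log y) := rpow_le_rpow_of_exponent_le one_le_two hsum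
      _ = (n : ℝ) ^ (log 2 / log y) := by
          rw [rpow_def_of_pos two_pos, rpow_def_of_pos (by positivity)]
          ring_nf

theorem Real.log_sq_le_sixteen_mul_sqrt {x : ℝ} (hx : 1 ≤ x) : log x ^ 2 ≤ 16 * √x := by
  have hlog : log x ≤ 4 * x ^ (1 / 4 : ℝ) := by
    have := log_le_rpow_div (by linarith) (by norm_num : (0 : ℝ) < 1 / 4)
    linarith
  have hsq : (x ^ (1 / 4 : ℝ)) ^ 2 = √x := by
    rw [sqrt_eq_rpow, ← rpow_natCast, ← rpow_mul (by linarith)]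
    norm_num
  nlinarith [log_nonneg hx]

theorem card_divisors_le_rpow_div_log_log {n : ℕ} (hn : 16 ≤ n) :
    (#n.divisors : ℝ) ≤ (n : ℝ) ^ (34 / log (log n)) := by
  set L := log n
  have hn0 : (0 : ℝ) < n := by positivity
  have hL : 4 * log 2 ≤ L := by
    rw [← log_rpow two_pos]
    exact log_le_log (by positivity) (by norm_num; exact_mod_cast hn)
  have hlog2 := log_two_gt_d9
  have hlog2' := log_two_lt_d9
  have hLL : 0 < log L := log_pos (by linarith)
  have hsqrtL : 1 < √L := by rw [lt_sqrt zero_le_one]; linarith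
  have hbase : 1 + L / log 2 ≤ L ^ 2 := by
    have : L / log 2 ≤ 2 * L := by rw [div_le_iff₀ (by linarith)]; nlinarith
    nlinarith
  have hsmall : (1 + L / log 2) ^ √L ≤ (n : ℝ) ^ (32 / log L) := by
    rw [rpow_def_of_pos (by positivity), rpow_def_of_pos hn0, exp_le_exp]
    have h1 : log (1 + L / log 2) ≤ 2 * log L := by
      calc log (1 + L / log 2) ≤ log (L ^ 2) := log_le_log (by positivity) hbase
        _ = 2 * log L := by rw [log_pow]; norm_num
    have h2 := log_sq_le_sixteen_mul_sqrt (x := L) (by linarith)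
    rw [← mul_div_assoc, le_div_iff₀ hLL]
    calc log (1 + L / log 2) * √L * log L ≤ 2 * log L * √L * log L := by gcongr
      _ = 2 * log L ^ 2 * √L := by ring
      _ ≤ 2 * (16 * √L) * √L := by gcongr
      _ = 32 * (√L * √L) := by ring
      _ = L * 32 := by rw [mul_self_sqrt (by linarith), mul_comm]
  have hlarge : (n : ℝ) ^ (log 2 / log √L) ≤ (n : ℝ) ^ (2 / log L) := by
    rw [log_sqrt (by linarith)]
    apply rpow_le_rpow_of_exponent_le (by exact_mod_cast (by omega : 1 ≤ n))
    rw [div_div_eq_mul_div]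
    exact div_le_div_of_nonneg_right (by linarith) hLL.le
  calc (#n.divisors : ℝ) ≤ (1 + L / log 2) ^ √L * (n : ℝ) ^ (log 2 / log √L) :=
        card_divisors_le_rpow (by omega) hsqrtL
    _ ≤ (n : ℝ) ^ (32 / log L) * (n : ℝ) ^ (2 / log L) := by gcongr
    _ = (n : ℝ) ^ (34 / log L) := by rw [← rpow_add hn0]; ring_nf

/-- The number of positive integer pairs `(x, y)` with `x² + 3y² = k` is at most
`k ^ (C / log log k)` for every `k ≥ 16` coprime to `6`. -/
theorem lattice_points_ellipse_three :
    ∃ C : ℝ, 0 < C ∧ ∀ k : ℕ, 16 ≤ k → Nat.Coprime k 6 →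
      ({p : ℕ × ℕ | 0 < p.1 ∧ 0 < p.2 ∧ p.1 ^ 2 + 3 * p.2 ^ 2 = k}.ncard : ℝ) ≤
        (k : ℝ) ^ (C / Real.log (Real.log k)) := by
  refine ⟨68, by norm_num, fun k hk hk6 => ?_⟩
  have hset : {p : ℕ × ℕ | 0 < p.1 ∧ 0 < p.2 ∧ p.1 ^ 2 + 3 * p.2 ^ 2 = k} =
      ellipsePoints 3 k := by
    ext p; simp [mem_ellipsePoints three_pos]
  have h6 : IsUnit ((2 * 3 : ℕ) : ZMod k) := (ZMod.isUnit_iff_coprime 6 k).mpr hk6.symm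
  rw [Nat.cast_mul, Nat.cast_ofNat, Nat.cast_ofNat] at h6
  have hcount : #(ellipsePoints 3 k) ≤ #k.divisors ^ 2 :=
    (card_ellipsePoints_le three_pos (isUnit_of_mul_isUnit_left h6)
      (by simpa using (isUnit_of_mul_isUnit_right h6).neg)).trans
      ((Nat.mul_le_mul_left _ (Nat.two_pow_card_primeFactors_le_card_divisors (by omega))).trans_eq
        (sq _).symm)
  rw [hset, Set.ncard_coe_finset]
  calc (#(ellipsePoints 3 k) : ℝ) ≤ (#k.divisors : ℝ) ^ 2 := by exact_mod_cast hcount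
    _ ≤ ((k : ℝ) ^ (34 / log (log k))) ^ 2 := by
        gcongr; exact card_divisors_le_rpow_div_log_log hk
    _ = (k : ℝ) ^ (68 / log (log k)) := by
        rw [← rpow_natCast, ← rpow_mul (by positivity)]; ring_nf
end

section
/- Let k be a positive integer coprime to 6. Then the number of pairs of positive integers (x, y) with x > y > 0, gcd(x, y) = 1, and 3x² − y² = k is at most 2^t, where t is the number of distinct prime factors of k. -/
section aux

/-- In `ZMod (p^n)` with `p` prime, an element is a unit iff its image in `ZMod p` is nonzero. -/
lemma zmod_pp_isUnit_iff {p n : ℕ} (hp : p.Prime) (hn : 0 < n) (x : ZMod (p ^ n)) :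
    IsUnit x ↔ (ZMod.castHom (dvd_pow_self p hn.ne') (ZMod p)) x ≠ 0 := by
  haveI : Fact p.Prime := ⟨hp⟩
  haveI : NeZero (p ^ n) := ⟨pow_ne_zero _ hp.pos.ne'⟩
  have hx : ((x.val : ℕ) : ZMod (p ^ n)) = x := ZMod.natCast_rightInverse x
  have hcast : (ZMod.castHom (dvd_pow_self p hn.ne') (ZMod p)) x = ((x.val : ℕ) : ZMod p) := by
    conv_lhs => rw [← hx]
    simp [map_natCast]
  rw [hcast, Ne, ZMod.natCast_eq_zero_iff]
  constructor
  · intro hu hdvd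
    rw [← hx, ZMod.isUnit_iff_coprime] at hu
    rw [Nat.coprime_pow_right_iff hn] at hu
    exact (Nat.Prime.coprime_iff_not_dvd hp).mp hu.symm hdvd
  · intro hdvd
    rw [← hx, ZMod.isUnit_iff_coprime, Nat.coprime_pow_right_iff hn]
    exact Nat.coprime_comm.mp ((Nat.Prime.coprime_iff_not_dvd hp).mpr hdvd)

/-- Square roots of a unit in `ZMod (p^n)`, `p` odd prime: at most 2. -/
lemma pp_sqrt_le {p n : ℕ} (hp : p.Prime) (hn : 0 < n) (hp2 : p ≠ 2) (a : ZMod (p ^ n))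
    (ha : IsUnit a) : {x : ZMod (p ^ n) | x ^ 2 = a}.ncard ≤ 2 := by
  haveI : Fact p.Prime := ⟨hp⟩
  haveI : NeZero (p ^ n) := ⟨pow_ne_zero _ hp.pos.ne'⟩
  set S := {x : ZMod (p ^ n) | x ^ 2 = a} with hS
  rcases S.eq_empty_or_nonempty with h | ⟨r, hr⟩
  · simp [h]
  have hr2 : r ^ 2 = a := hr
  have hru : IsUnit r := by
    have := ha
    rw [← hr2, sq] at this
    exact isUnit_of_mul_isUnit_left this
  set ψ := ZMod.castHom (dvd_pow_self p hn.ne') (ZMod p) with hψ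
  have h2 : (ψ (2 : ZMod (p ^ n))) ≠ 0 := by
    have h22 : (2 : ZMod (p ^ n)) = ((2 : ℕ) : ZMod (p ^ n)) := by norm_num
    rw [h22, map_natCast, Ne, ZMod.natCast_eq_zero_iff]
    intro hd
    exact hp2 ((Nat.prime_dvd_prime_iff_eq hp Nat.prime_two).mp hd)
  have hsub : S ⊆ {r, -r} := by
    intro s hs
    have hs2 : s ^ 2 = a := hs
    have hzero : (r - s) * (r + s) = 0 := by ring_nf; rw [hr2, hs2]; ring
    have hdich : IsUnit (r - s) ∨ IsUnit (r + s) := by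
      rw [zmod_pp_isUnit_iff hp hn, zmod_pp_isUnit_iff hp hn]
      by_contra hcon
      push_neg at hcon
      obtain ⟨h1, h2'⟩ := hcon
      have hsum : ψ (r - s) + ψ (r + s) = ψ 2 * ψ r := by
        rw [← map_add, ← map_mul]; ring_nf
      rw [h1, h2', zero_add] at hsum
      have hrψ : ψ r ≠ 0 := (zmod_pp_isUnit_iff hp hn r).mp hru
      exact (mul_ne_zero h2 hrψ) hsum.symm
    rcases hdich with hu | hu
    · have : r + s = 0 := by
        obtain ⟨u, hu'⟩ := hu
        have := congrArg (fun z => (↑u⁻¹ : ZMod (p ^ n)) * z) hzero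
        simpa [← hu', ← mul_assoc] using this
      right
      exact eq_neg_of_add_eq_zero_right this
    · have : r - s = 0 := by
        obtain ⟨u, hu'⟩ := hu
        have := congrArg (fun z => z * (↑u⁻¹ : ZMod (p ^ n))) hzero
        simpa [← hu', mul_comm, mul_assoc, mul_left_comm] using this
      left
      exact (sub_eq_zero.mp this).symm
  calc S.ncard ≤ ({r, -r} : Set (ZMod (p ^ n))).ncard :=
        Set.ncard_le_ncard hsub (Set.toFinite _)
    _ ≤ 2 := by
        apply (Set.ncard_insert_le _ _).trans
        simp

lemma ncard_prod_set {α β : Type*} (s : Set α) (t : Set β) :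
    (s ×ˢ t).ncard = s.ncard * t.ncard := by
  rw [← Nat.card_coe_set_eq, ← Nat.card_coe_set_eq, ← Nat.card_coe_set_eq, ← Nat.card_prod]
  exact Nat.card_congr (Equiv.Set.prod s t)

lemma sqrt_ncard_le (n : ℕ) : 0 < n → ¬ 2 ∣ n → ∀ a : ZMod n, IsUnit a →
    {x : ZMod n | x ^ 2 = a}.ncard ≤ 2 ^ n.primeFactors.card := by
  induction n using Nat.recOnPosPrimePosCoprime with
  | prime_pow p m hp hm =>
    intro _ h2 a ha
    have hpp : p.Prime := hp
    have hp2 : p ≠ 2 := by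
      rintro rfl
      exact h2 (dvd_pow_self 2 hm.ne')
    rw [Nat.primeFactors_prime_pow hm.ne' hp, Finset.card_singleton, pow_one]
    exact pp_sqrt_le hpp hm hp2 a ha
  | zero => intro h; omega
  | one =>
    intro _ _ a _
    haveI : Subsingleton (ZMod 1) := by infer_instance
    have hsub : {x : ZMod 1 | x ^ 2 = a} ⊆ {0} := fun x _ => by
      simp [Subsingleton.elim x 0]
    calc {x : ZMod 1 | x ^ 2 = a}.ncard ≤ ({0} : Set (ZMod 1)).ncard :=
          Set.ncard_le_ncard hsub (Set.finite_singleton _)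
      _ ≤ 2 ^ (Nat.primeFactors 1).card := by simp
  | coprime a b ha hb hab iha ihb =>
    intro _ h2 c hc
    have ha0 : 0 < a := by omega
    have hb0 : 0 < b := by omega
    haveI : NeZero a := ⟨ha0.ne'⟩
    haveI : NeZero b := ⟨hb0.ne'⟩
    have h2a : ¬ 2 ∣ a := fun h => h2 (h.mul_right b)
    have h2b : ¬ 2 ∣ b := fun h => h2 (h.mul_left a)
    set e := ZMod.chineseRemainder hab with he
    set s1 := {x : ZMod a | x ^ 2 = (e c).1} with hs1
    set s2 := {x : ZMod b | x ^ 2 = (e c).2} with hs2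
    have hmap : ∀ x ∈ {x : ZMod (a * b) | x ^ 2 = c}, e x ∈ s1 ×ˢ s2 := by
      intro x hx
      have hx2 : x ^ 2 = c := hx
      constructor
      · show (e x).1 ^ 2 = (e c).1
        rw [← hx2]; exact (congrArg Prod.fst (map_pow e x 2)).symm
      · show (e x).2 ^ 2 = (e c).2
        rw [← hx2]; exact (congrArg Prod.snd (map_pow e x 2)).symm
    have hcu : IsUnit (e c) := (e : ZMod (a * b) →+* ZMod a × ZMod b).isUnit_map hc
    have hcu1 : IsUnit (e c).1 := (RingHom.fst (ZMod a) (ZMod b)).isUnit_map hcu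
    have hcu2 : IsUnit (e c).2 := (RingHom.snd (ZMod a) (ZMod b)).isUnit_map hcu
    calc {x : ZMod (a * b) | x ^ 2 = c}.ncard ≤ (s1 ×ˢ s2).ncard :=
          Set.ncard_le_ncard_of_injOn e hmap (e.injective.injOn) (Set.toFinite _)
      _ = s1.ncard * s2.ncard := ncard_prod_set s1 s2
      _ ≤ 2 ^ a.primeFactors.card * 2 ^ b.primeFactors.card :=
          Nat.mul_le_mul (iha ha0 h2a _ hcu1) (ihb hb0 h2b _ hcu2)
      _ = 2 ^ (a * b).primeFactors.card := by
          rw [← pow_add, Nat.primeFactors_mul ha0.ne' hb0.ne',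
            Finset.card_union_of_disjoint hab.disjoint_primeFactors]

end aux

/-- For `k` coprime to `6`, the number of pairs of positive integers `(x, y)` with
`x > y > 0`, `gcd(x, y) = 1` and `3x² − y² = k` (stated as `3x² = k + y²`) is at most
`2 ^ t`, where `t` is the number of distinct prime factors of `k`. -/
theorem coprime_hyperbola_solutions_le (k : ℕ) (hk : 0 < k) (hcop : Nat.Coprime k 6) :
    {p : ℕ × ℕ | 0 < p.2 ∧ p.2 < p.1 ∧ Nat.Coprime p.1 p.2 ∧
      3 * p.1 ^ 2 = k + p.2 ^ 2}.ncard ≤ 2 ^ k.primeFactors.card := by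
  haveI : NeZero k := ⟨hk.ne'⟩
  have h2k : ¬ 2 ∣ k := by
    intro h
    have : (2 : ℕ) ∣ Nat.gcd k 6 := Nat.dvd_gcd h (by norm_num)
    rw [hcop] at this
    omega
  have h3k : Nat.Coprime k 3 := Nat.Coprime.coprime_dvd_right (by norm_num) hcop
  have h3u : IsUnit (3 : ZMod k) := by
    rw [show (3 : ZMod k) = ((3 : ℕ) : ZMod k) by norm_num, ZMod.isUnit_iff_coprime]
    exact h3k.symm
  set S := {p : ℕ × ℕ | 0 < p.2 ∧ p.2 < p.1 ∧ Nat.Coprime p.1 p.2 ∧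
      3 * p.1 ^ 2 = k + p.2 ^ 2} with hSdef
  set f : ℕ × ℕ → ZMod k := fun p => (p.2 : ZMod k) * (p.1 : ZMod k)⁻¹ with hf
  have hcopk : ∀ p ∈ S, Nat.Coprime p.1 k := by
    rintro ⟨x, y⟩ ⟨hy, hyx, hxy, heq⟩
    dsimp only at hy hyx hxy heq ⊢
    have hd1 : Nat.gcd x k ∣ 3 * x ^ 2 :=
      Dvd.dvd.mul_left ((Nat.gcd_dvd_left x k).pow (by norm_num)) 3
    have hd2 : Nat.gcd x k ∣ y ^ 2 := by
      have := Nat.dvd_sub hd1 (Nat.gcd_dvd_right x k)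
      rwa [show 3 * x ^ 2 - k = y ^ 2 by omega] at this
    have hxy2 : Nat.Coprime x (y ^ 2) := hxy.pow_right 2
    have h := Nat.dvd_gcd (Nat.gcd_dvd_left x k) hd2
    rw [Nat.Coprime] at hxy2
    rw [hxy2] at h
    exact Nat.dvd_one.mp h
  have hxu : ∀ p ∈ S, IsUnit ((p.1 : ℕ) : ZMod k) := by
    intro p hp
    rw [ZMod.isUnit_iff_coprime]
    exact hcopk p hp
  have hxk : ∀ p ∈ S, 2 * p.1 ^ 2 < k := by
    rintro ⟨x, y⟩ ⟨hy, hyx, hxy, heq⟩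
    dsimp only at hy hyx hxy heq ⊢
    have : y ^ 2 < x ^ 2 := Nat.pow_lt_pow_left hyx (by norm_num)
    omega
  have hmap : ∀ p ∈ S, f p ∈ {r : ZMod k | r ^ 2 = 3} := by
    rintro ⟨x, y⟩ hp
    have hxu' : IsUnit ((x : ℕ) : ZMod k) := hxu _ hp
    obtain ⟨hy, hyx, hxy, heq⟩ := hp
    dsimp only at hy hyx hxy heq
    have hinv : ((x : ℕ) : ZMod k) * ((x : ℕ) : ZMod k)⁻¹ = 1 := ZMod.mul_inv_of_unit _ hxu'
    have hsq : ((y : ℕ) : ZMod k) ^ 2 = 3 * ((x : ℕ) : ZMod k) ^ 2 := by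
      have := congrArg (fun n : ℕ => (n : ZMod k)) heq
      push_cast at this
      rw [ZMod.natCast_self] at this
      linear_combination -this
    show (((y : ℕ) : ZMod k) * ((x : ℕ) : ZMod k)⁻¹) ^ 2 = 3
    calc (((y : ℕ) : ZMod k) * ((x : ℕ) : ZMod k)⁻¹) ^ 2
        = ((y : ℕ) : ZMod k) ^ 2 * ((x : ℕ) : ZMod k)⁻¹ ^ 2 := by ring
      _ = 3 * (((x : ℕ) : ZMod k) * ((x : ℕ) : ZMod k)⁻¹) ^ 2 := by rw [hsq]; ring
      _ = 3 := by rw [hinv]; ring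
  have hinj : Set.InjOn f S := by
    rintro ⟨x1, y1⟩ hp1 ⟨x2, y2⟩ hp2 hfe
    have hu1 := hxu _ hp1
    have hu2 := hxu _ hp2
    have hb1 := hxk _ hp1
    have hb2 := hxk _ hp2
    dsimp only at hb1 hb2
    obtain ⟨hy1, hyx1, hxy1, heq1⟩ := hp1
    obtain ⟨hy2, hyx2, hxy2, heq2⟩ := hp2
    dsimp only at hy1 hyx1 hxy1 heq1 hy2 hyx2 hxy2 heq2
    have hinv1 : ((x1 : ℕ) : ZMod k)⁻¹ * ((x1 : ℕ) : ZMod k) = 1 := ZMod.inv_mul_of_unit _ hu1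
    have hinv2 : ((x2 : ℕ) : ZMod k)⁻¹ * ((x2 : ℕ) : ZMod k) = 1 := ZMod.inv_mul_of_unit _ hu2
    have hfe' : ((y1 : ℕ) : ZMod k) * ((x1 : ℕ) : ZMod k)⁻¹
        = ((y2 : ℕ) : ZMod k) * ((x2 : ℕ) : ZMod k)⁻¹ := hfe
    have hcross : ((y1 * x2 : ℕ) : ZMod k) = ((y2 * x1 : ℕ) : ZMod k) := by
      push_cast
      have h := congrArg (· * (((x1 : ℕ) : ZMod k) * ((x2 : ℕ) : ZMod k))) hfe'
      calc ((y1 : ℕ) : ZMod k) * ((x2 : ℕ) : ZMod k)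
          = ((y1 : ℕ) : ZMod k) * (((x1 : ℕ) : ZMod k)⁻¹ * ((x1 : ℕ) : ZMod k)) * ((x2 : ℕ) : ZMod k) := by
            rw [hinv1]; ring
        _ = ((y1 : ℕ) : ZMod k) * ((x1 : ℕ) : ZMod k)⁻¹ * (((x1 : ℕ) : ZMod k) * ((x2 : ℕ) : ZMod k)) := by ring
        _ = ((y2 : ℕ) : ZMod k) * ((x2 : ℕ) : ZMod k)⁻¹ * (((x1 : ℕ) : ZMod k) * ((x2 : ℕ) : ZMod k)) := h
        _ = ((y2 : ℕ) : ZMod k) * (((x2 : ℕ) : ZMod k)⁻¹ * ((x2 : ℕ) : ZMod k)) * ((x1 : ℕ) : ZMod k) := by ring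
        _ = ((y2 : ℕ) : ZMod k) * ((x1 : ℕ) : ZMod k) := by rw [hinv2]; ring
    have hxx : x1 * x2 < k := by
      rcases le_total x1 x2 with h | h
      · have h1 : x1 * x2 ≤ x2 * x2 := Nat.mul_le_mul_right _ h
        have h2 : x2 * x2 = x2 ^ 2 := by ring
        omega
      · have h1 : x1 * x2 ≤ x1 * x1 := Nat.mul_le_mul_left _ h
        have h2 : x1 * x1 = x1 ^ 2 := by ring
        omega
    have hlt1 : y1 * x2 < k := by
      have h1 : y1 * x2 ≤ x1 * x2 := Nat.mul_le_mul_right _ (le_of_lt hyx1)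
      omega
    have hlt2 : y2 * x1 < k := by
      have h1 : y2 * x1 ≤ x2 * x1 := Nat.mul_le_mul_right _ (le_of_lt hyx2)
      have h2 : x2 * x1 = x1 * x2 := Nat.mul_comm _ _
      omega
    have heqn : y1 * x2 = y2 * x1 := by
      have h := congrArg ZMod.val hcross
      rwa [ZMod.val_cast_of_lt hlt1, ZMod.val_cast_of_lt hlt2] at h
    have hd12 : x1 ∣ x2 := by
      have h1 : x1 ∣ y1 * x2 := heqn ▸ Dvd.intro_left y2 rfl
      exact Nat.Coprime.dvd_of_dvd_mul_left hxy1 h1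
    have hd21 : x2 ∣ x1 := by
      have h1 : x2 ∣ y2 * x1 := heqn.symm ▸ Dvd.intro_left y1 rfl
      exact Nat.Coprime.dvd_of_dvd_mul_left hxy2 h1
    have hx12 : x1 = x2 := Nat.dvd_antisymm hd12 hd21
    have hy12 : y1 = y2 := by
      subst hx12
      exact Nat.eq_of_mul_eq_mul_right (by omega) heqn
    simp [hx12, hy12]
  calc S.ncard ≤ {r : ZMod k | r ^ 2 = 3}.ncard :=
        Set.ncard_le_ncard_of_injOn f hmap hinj (Set.toFinite _)
    _ ≤ 2 ^ k.primeFactors.card := sqrt_ncard_le k hk h2k 3 h3u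
end

section
/- Let S be a finite set of natural numbers that is progression-free, i.e., for all i, j, h ∈ S, i + j = 2h implies i = j. Let R be a commutative ring, let α, β : S → R, and form the polynomials A = Σ_{i ∈ S} α(i)·Xⁱ and B = Σ_{j ∈ S} β(j)·Xʲ in R[X]. Then for every i ∈ S, the coefficient of X^(2i) in A·B equals α(i)·β(i). -/
open Polynomial Finset

theorem Polynomial.coeff_sum_C_mul_X_pow_mul_sum_C_mul_X_pow {R : Type*} [Semiring R]
    (S T : Finset ℕ) (α β : ℕ → R) (n : ℕ) :
    ((∑ i ∈ S, C (α i) * X ^ i) * (∑ j ∈ T, C (β j) * X ^ j)).coeff n =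
      ∑ p ∈ S ×ˢ T with p.1 + p.2 = n, α p.1 * β p.2 := by
  simp only [C_mul_X_pow_eq_monomial, sum_mul_sum, ← sum_product', monomial_mul_monomial,
    finsetSum_coeff, coeff_monomial, sum_filter]

theorem Finset.filter_product_add_eq_two_mul_eq_singleton {S : Finset ℕ}
    (hS : ∀ i ∈ S, ∀ j ∈ S, ∀ h ∈ S, i + j = 2 * h → i = j) {i : ℕ} (hi : i ∈ S) :
    {p ∈ S ×ˢ S | p.1 + p.2 = 2 * i} = {(i, i)} := by
  ext ⟨a, b⟩
  simp only [mem_filter, mem_product, mem_singleton, Prod.mk.injEq]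
  constructor
  · rintro ⟨⟨ha, hb⟩, hab⟩
    have hab' : a = b := hS a ha b hb i hi hab
    omega
  · rintro ⟨rfl, rfl⟩
    exact ⟨⟨hi, hi⟩, by omega⟩

open Polynomial in
/-- If `S` is progression-free, then for the polynomials `A = Σ_{i ∈ S} α(i) Xⁱ` and
`B = Σ_{j ∈ S} β(j) Xʲ`, the coefficient of `X^(2i)` in `A·B` equals `α(i)·β(i)`
for every `i ∈ S`. -/
theorem progression_free_coeff {R : Type*} [CommRing R] (S : Finset ℕ)
    (hS : ∀ i ∈ S, ∀ j ∈ S, ∀ h ∈ S, i + j = 2 * h → i = j)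
    (α β : ℕ → R) :
    ∀ i ∈ S,
      ((∑ i ∈ S, C (α i) * X ^ i) * (∑ j ∈ S, C (β j) * X ^ j)).coeff (2 * i) =
        α i * β i := by
  intro i hi
  rw [coeff_sum_C_mul_X_pow_mul_sum_C_mul_X_pow,
    filter_product_add_eq_two_mul_eq_singleton hS hi, sum_singleton]
end

section
/- There exists a constant C > 0 such that for all integers n ≥ 2 and all integers k with 0 ≤ k ≤ n, the sum over all primes p of the exponent of p in the prime factorization of the binomial coefficient C(n, k) is at most C·n / log n. -/
lemma choose_le_two_pow' {n k : ℕ} (h : k ≤ n) : n.choose k ≤ 2 ^ n := by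
  calc n.choose k ≤ ∑ i ∈ Finset.range (n + 1), n.choose i :=
        Finset.single_le_sum (fun i _ => Nat.zero_le _)
          (Finset.mem_range.2 (Nat.lt_succ_of_le h))
    _ = 2 ^ n := Nat.sum_range_choose n

/-- The sum over all primes `p` of the exponent of `p` in `C(n, k)` is `O(n / log n)`. -/
theorem sum_factorization_choose_le :
    ∃ C : ℝ, 0 < C ∧ ∀ n : ℕ, 2 ≤ n → ∀ k : ℕ, k ≤ n →
      ((∑ p ∈ (n.choose k).factorization.support, (n.choose k).factorization p : ℕ) : ℝ) ≤
        C * n / Real.log n := by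
  refine ⟨100, by norm_num, fun n hn k hk => ?_⟩
  have hn1 : (1:ℝ) < n := by exact_mod_cast hn
  have hn0 : (0:ℝ) < n := by linarith
  have hlog : 0 < Real.log n := Real.log_pos hn1
  have hsq : (0:ℝ) < Real.sqrt n := Real.sqrt_pos.2 hn0
  have hsq1 : (1:ℝ) ≤ Real.sqrt n := by
    rw [show (1:ℝ) = Real.sqrt 1 by simp]
    exact Real.sqrt_le_sqrt (by linarith)
  set c := n.choose k with hcdef
  have hc0 : 0 < c := Nat.choose_pos hk
  set S := c.factorization.support with hS
  set A := S.filter (fun p => p * p ≤ n) with hA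
  set B := S.filter (fun p => ¬ p * p ≤ n) with hB
  -- facts about members of S
  have hmem : ∀ p ∈ S, p.Prime ∧ p ^ c.factorization p ≤ n := by
    intro p hp
    rw [hS, Nat.support_factorization] at hp
    exact ⟨Nat.prime_of_mem_primeFactors hp,
      Nat.pow_factorization_choose_le (by omega)⟩
  -- bound on A-sum
  have hApart : ∀ p ∈ A, (c.factorization p : ℝ) ≤ 2 * Real.log n := by
    intro p hp
    obtain ⟨hprime, hpow⟩ := hmem p (Finset.mem_filter.1 hp).1
    have h2 : (2:ℕ) ^ c.factorization p ≤ n :=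
      le_trans (Nat.pow_le_pow_left hprime.two_le _) hpow
    have h2r : (2:ℝ) ^ c.factorization p ≤ n := by exact_mod_cast h2
    have := Real.log_le_log (by positivity) h2r
    rw [Real.log_pow] at this
    have hl2 : (1:ℝ)/2 ≤ Real.log 2 := by
      have := Real.log_two_gt_d9; linarith
    nlinarith [this, hl2, (Nat.cast_nonneg (c.factorization p) : (0:ℝ) ≤ _)]
  have hAcard : (A.card : ℝ) ≤ 2 * Real.sqrt n := by
    have hsub : A ⊆ Finset.range (Nat.sqrt n + 1) := by
      intro p hp
      have := (Finset.mem_filter.1 hp).2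
      simp only [Finset.mem_range]
      have : p ≤ Nat.sqrt n := Nat.le_sqrt.2 this
      omega
    have h1 : (A.card : ℝ) ≤ (Nat.sqrt n : ℝ) + 1 := by
      have := Finset.card_le_card hsub
      rw [Finset.card_range] at this
      exact_mod_cast this
    have h2 : (Nat.sqrt n : ℝ) ≤ Real.sqrt n := Real.nat_sqrt_le_real_sqrt
    linarith
  have hAsum : ((∑ p ∈ A, c.factorization p : ℕ) : ℝ) ≤ 4 * Real.sqrt n * Real.log n := by
    push_cast
    calc ∑ p ∈ A, (c.factorization p : ℝ) ≤ ∑ _p ∈ A, 2 * Real.log n :=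
          Finset.sum_le_sum hApart
      _ = A.card * (2 * Real.log n) := by rw [Finset.sum_const, nsmul_eq_mul]
      _ ≤ (2 * Real.sqrt n) * (2 * Real.log n) := by
          apply mul_le_mul_of_nonneg_right hAcard (by positivity)
      _ = 4 * Real.sqrt n * Real.log n := by ring
  -- (log n)^2 ≤ 16 √n
  have hlogsq : Real.log n * Real.log n ≤ 16 * Real.sqrt n := by
    have h4 : Real.log n ≤ 4 * (n:ℝ) ^ ((1:ℝ)/4) := by
      have := Real.log_le_rpow_div (le_of_lt hn0) (show (0:ℝ) < 1/4 by norm_num)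
      rw [div_div_eq_mul_div, mul_comm] at this
      calc Real.log n ≤ (n:ℝ) ^ ((1:ℝ)/4) / (1/4) := Real.log_le_rpow_div (le_of_lt hn0) (by norm_num)
        _ = 4 * (n:ℝ) ^ ((1:ℝ)/4) := by ring
    have hrp : (0:ℝ) ≤ (n:ℝ) ^ ((1:ℝ)/4) := Real.rpow_nonneg (le_of_lt hn0) _
    have hmul : (n:ℝ) ^ ((1:ℝ)/4) * (n:ℝ) ^ ((1:ℝ)/4) = Real.sqrt n := by
      rw [← Real.rpow_add hn0, Real.sqrt_eq_rpow]
      norm_num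
    nlinarith [Real.log_nonneg (le_of_lt hn1)]
  have hAfinal : ((∑ p ∈ A, c.factorization p : ℕ) : ℝ) ≤ 64 * n / Real.log n := by
    rw [le_div_iff₀ hlog]
    calc ((∑ p ∈ A, c.factorization p : ℕ) : ℝ) * Real.log n
        ≤ (4 * Real.sqrt n * Real.log n) * Real.log n := by
          apply mul_le_mul_of_nonneg_right hAsum (le_of_lt hlog)
      _ = 4 * Real.sqrt n * (Real.log n * Real.log n) := by ring
      _ ≤ 4 * Real.sqrt n * (16 * Real.sqrt n) := by
          apply mul_le_mul_of_nonneg_left hlogsq (by positivity)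
      _ = 64 * (Real.sqrt n * Real.sqrt n) := by ring
      _ = 64 * n := by rw [Real.mul_self_sqrt (le_of_lt hn0)]
  -- B part
  have hBone : ∀ p ∈ B, c.factorization p ≤ 1 := by
    intro p hp
    obtain ⟨hpf, hnp⟩ := Finset.mem_filter.1 hp
    obtain ⟨hprime, hpow⟩ := hmem p hpf
    by_contra h
    push_neg at h
    have : p * p ≤ p ^ c.factorization p := by
      rw [← pow_two]
      exact Nat.pow_le_pow_right hprime.pos h
    omega
  have hBcard : (B.card : ℝ) ≤ 2 * n / Real.log n := by
    have hdvd : ∏ p ∈ B, p ∣ c := by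
      refine dvd_trans ?_ (Nat.prod_primeFactors_dvd c)
      apply Finset.prod_dvd_prod_of_subset
      intro p hp
      have := (Finset.mem_filter.1 hp).1
      rwa [hS, Nat.support_factorization] at this
    have hle : (∏ p ∈ B, p : ℕ) ≤ 2 ^ n :=
      le_trans (Nat.le_of_dvd hc0 hdvd) (choose_le_two_pow' hk)
    have hpow : Real.sqrt n ^ B.card ≤ (2:ℝ) ^ n := by
      calc Real.sqrt n ^ B.card = ∏ _p ∈ B, Real.sqrt n := by rw [Finset.prod_const]
        _ ≤ ∏ p ∈ B, (p : ℝ) := by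
            apply Finset.prod_le_prod (fun _ _ => le_of_lt hsq)
            intro p hp
            obtain ⟨hpf, hnp⟩ := Finset.mem_filter.1 hp
            have : (n:ℝ) < (p:ℝ) ^ 2 := by
              push_neg at hnp
              rw [← pow_two] at hnp
              exact_mod_cast hnp
            exact le_of_lt ((Real.sqrt_lt' (by exact_mod_cast (hmem p hpf).1.pos)).2 this)
        _ = ((∏ p ∈ B, p : ℕ) : ℝ) := by push_cast; ring
        _ ≤ (2:ℝ) ^ n := by exact_mod_cast hle
    have hlogle := Real.log_le_log (by positivity) hpow
    rw [Real.log_pow, Real.log_pow, Real.log_sqrt (le_of_lt hn0)] at hlogle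
    have hl2 : Real.log 2 ≤ 1 := by
      have := Real.log_le_sub_one_of_pos (show (0:ℝ) < 2 by norm_num); linarith
    rw [le_div_iff₀ hlog]
    have : (B.card : ℝ) * (Real.log n / 2) ≤ n * 1 :=
      le_trans hlogle (mul_le_mul_of_nonneg_left hl2 (le_of_lt hn0))
    nlinarith
  have hBsum : ((∑ p ∈ B, c.factorization p : ℕ) : ℝ) ≤ 2 * n / Real.log n := by
    have h1 : (∑ p ∈ B, c.factorization p) ≤ B.card :=
      le_trans (Finset.sum_le_sum hBone) (by simp)
    calc ((∑ p ∈ B, c.factorization p : ℕ) : ℝ) ≤ (B.card : ℝ) := by exact_mod_cast h1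
      _ ≤ 2 * n / Real.log n := hBcard
  -- combine
  have hsplit : ∑ p ∈ S, c.factorization p
      = ∑ p ∈ A, c.factorization p + ∑ p ∈ B, c.factorization p := by
    rw [hA, hB, Finset.sum_filter_add_sum_filter_not]
  calc ((∑ p ∈ S, c.factorization p : ℕ) : ℝ)
      = ((∑ p ∈ A, c.factorization p : ℕ) : ℝ) + ((∑ p ∈ B, c.factorization p : ℕ) : ℝ) := by
        rw [hsplit]; push_cast; ring
    _ ≤ 64 * n / Real.log n + 2 * n / Real.log n := add_le_add hAfinal hBsum
    _ ≤ 100 * n / Real.log n := by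
        rw [← add_div]
        gcongr
        linarith
end

section
/- For every integer k ≥ 1, one has (2^k)! = Π_{i=1}^{k} C(2^i, 2^{i−1})^{2^{k−i}}. -/
/-! Splitting `2n` objects into two halves gives `(2n)! = C(2n, n) · (n!)²`; iterating this down
from `n = 2^(k-1)` squares the lower factors once more at each level, which produces the exponents
`2^(k-i)`. -/

open Finset

theorem Nat.factorial_two_mul_eq (n : ℕ) :
    (2 * n).factorial = (2 * n).choose n * n.factorial ^ 2 := by
  rw [two_mul, ← Nat.add_choose_mul_factorial_mul_factorial, mul_assoc, sq]

theorem vardi_product_identity_general (k : ℕ) :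
    (2 ^ k).factorial =
      ∏ i ∈ Finset.Icc 1 k, ((2 ^ i).choose (2 ^ (i - 1))) ^ 2 ^ (k - i) := by
  induction k with
  | zero => rfl
  | succ k ih =>
    have square_prod : (∏ i ∈ Icc 1 k, ((2 ^ i).choose (2 ^ (i - 1))) ^ 2 ^ (k - i)) ^ 2 =
        ∏ i ∈ Icc 1 k, ((2 ^ i).choose (2 ^ (i - 1))) ^ 2 ^ (k + 1 - i) := by
      rw [← prod_pow]
      refine prod_congr rfl fun i hi => ?_
      rw [← pow_mul, ← pow_succ, Nat.sub_add_comm (mem_Icc.mp hi).2]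
    rw [pow_succ', Nat.factorial_two_mul_eq, ih, square_prod, ← pow_succ',
      prod_Icc_succ_top (Nat.le_add_left 1 k), Nat.add_sub_cancel, Nat.sub_self, pow_zero, pow_one,
      mul_comm]

/-- Vardi's product identity: `(2^k)! = Π_{i=1}^{k} C(2^i, 2^(i−1))^(2^(k−i))`. -/
theorem vardi_product_identity (k : ℕ) (hk : 1 ≤ k) :
    (2 ^ k).factorial =
      ∏ i ∈ Finset.Icc 1 k, ((2 ^ i).choose (2 ^ (i - 1))) ^ 2 ^ (k - i) :=
  vardi_product_identity_general k
end
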